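/- arXiv:1906.10114 — 4 statements merged into one kernel-verified Lean document; each statement's English description precedes it below -/
import Mathlib

section
/- Let η ∈ ℝ with 0 ≤ η < 1 and a ∈ [0,1]. Then every root ρ ∈ ℂ of the quadratic equation ρ² − (1+a)ηρ + aη = 0 satisfies |ρ| < 1. In particular, if (1+a)²η² < 4aη then the roots are complex with |ρ| = √(aη) < 1, while if (1+a)²η² ≥ 4aη the roots are real and lie in (−1,1). -/
/-!
Write the equation as `ρ² − sρ + q = 0` with `s = (1+a)η` and `q = aη`. Since the coefficients
are real, a non-real root comes with its conjugate, so `2 Re ρ = s` and `|ρ|² = q`; this happens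
exactly when the discriminant `s² − 4q` is negative, and then `|ρ| = √(aη) < 1`. A real root lies
in `(−1, 1)` because `p(±1) = 1 ∓ s + q > 0` and `|s| < 2`: here `p(1) = 1 − η` and `p(−1) ≥ 1`.
-/

open Complex

section RealQuadratic

variable {s q : ℝ} {ρ : ℂ}

lemma re_im_eqs_of_sq_sub_mul_add_eq_zero (h : ρ ^ 2 - s * ρ + q = 0) :
    ρ.re ^ 2 - ρ.im ^ 2 - s * ρ.re + q = 0 ∧ ρ.im * (2 * ρ.re - s) = 0 := by
  have hre := congrArg re h
  have him := congrArg im h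
  simp only [sq, sub_re, add_re, mul_re, ofReal_re, ofReal_im, sub_im, add_im, mul_im,
    zero_re, zero_im] at hre him
  constructor <;> linarith

lemma two_mul_re_eq_and_sq_norm_eq_of_im_ne_zero (h : ρ ^ 2 - s * ρ + q = 0)
    (hρ : ρ.im ≠ 0) : 2 * ρ.re = s ∧ ‖ρ‖ ^ 2 = q := by
  obtain ⟨hre, him⟩ := re_im_eqs_of_sq_sub_mul_add_eq_zero h
  have hs : 2 * ρ.re = s := by
    linarith [(mul_eq_zero.mp him).resolve_left hρ]
  refine ⟨hs, ?_⟩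
  rw [Complex.sq_norm, normSq_apply]
  subst hs
  linarith

lemma im_eq_zero_of_discrim_nonneg (h : ρ ^ 2 - s * ρ + q = 0) (hd : 4 * q ≤ s ^ 2) :
    ρ.im = 0 := by
  by_contra hρ
  obtain ⟨hs, hq⟩ := two_mul_re_eq_and_sq_norm_eq_of_im_ne_zero h hρ
  rw [Complex.sq_norm, normSq_apply] at hq
  subst hs
  nlinarith [mul_self_pos.mpr hρ]

lemma im_ne_zero_of_discrim_neg (h : ρ ^ 2 - s * ρ + q = 0) (hd : s ^ 2 < 4 * q) :
    ρ.im ≠ 0 := by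
  intro hρ
  have hre := (re_im_eqs_of_sq_sub_mul_add_eq_zero h).1
  rw [hρ] at hre
  nlinarith [sq_nonneg (2 * ρ.re - s)]

lemma abs_lt_one_of_sq_sub_mul_add_eq_zero {x : ℝ} (h : x ^ 2 - s * x + q = 0)
    (hq : q < 1) (hs : |s| < 1 + q) : |x| < 1 := by
  obtain ⟨hs_lo, hs_hi⟩ := abs_lt.mp hs
  rw [abs_lt]
  constructor
  · by_contra! hx
    -- `p(x) - p(-1) = (x + 1)(x - 1 + s) ≥ 0` for `x ≤ -1`
    nlinarith [mul_nonneg (neg_nonneg.mpr (by linarith : x + 1 ≤ 0))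
      (by linarith : (0 : ℝ) ≤ 1 - s - x)]
  · by_contra! hx
    -- `p(x) - p(1) = (x - 1)(x + 1 - s) ≥ 0` for `x ≥ 1`
    nlinarith [mul_nonneg (by linarith : (0 : ℝ) ≤ x - 1) (by linarith : (0 : ℝ) ≤ x + 1 - s)]

lemma norm_lt_one_of_sq_sub_mul_add_eq_zero (h : ρ ^ 2 - s * ρ + q = 0) (hq : q < 1)
    (hs : |s| < 1 + q) : ‖ρ‖ < 1 := by
  by_cases hρ : ρ.im = 0
  · have hx : ρ.re ^ 2 - s * ρ.re + q = 0 := by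
      simpa [hρ] using (re_im_eqs_of_sq_sub_mul_add_eq_zero h).1
    rw [← abs_re_eq_norm.mpr hρ]
    exact abs_lt_one_of_sq_sub_mul_add_eq_zero hx hq hs
  · have hq' := (two_mul_re_eq_and_sq_norm_eq_of_im_ne_zero h hρ).2
    nlinarith [norm_nonneg ρ]

end RealQuadratic

/-- For `0 ≤ η < 1` and `a ∈ [0,1]`, every root `ρ ∈ ℂ` of
`ρ² − (1+a)ηρ + aη = 0` satisfies `|ρ| < 1`; if `(1+a)²η² < 4aη` the roots are
non-real with `|ρ| = √(aη) < 1`, and if `(1+a)²η² ≥ 4aη` the roots are real in `(−1,1)`. -/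
theorem stmt2 (η a : ℝ) (hη0 : 0 ≤ η) (hη1 : η < 1) (ha : a ∈ Set.Icc (0 : ℝ) 1) :
    (∀ ρ : ℂ, ρ ^ 2 - ((1 + a : ℝ) : ℂ) * (η : ℂ) * ρ + (a : ℂ) * (η : ℂ) = 0 →
        ‖ρ‖ < 1) ∧
    ((1 + a) ^ 2 * η ^ 2 < 4 * a * η →
      ∀ ρ : ℂ, ρ ^ 2 - ((1 + a : ℝ) : ℂ) * (η : ℂ) * ρ + (a : ℂ) * (η : ℂ) = 0 →
        ρ.im ≠ 0 ∧ ‖ρ‖ = Real.sqrt (a * η) ∧ Real.sqrt (a * η) < 1) ∧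
    ((1 + a) ^ 2 * η ^ 2 ≥ 4 * a * η →
      ∀ ρ : ℂ, ρ ^ 2 - ((1 + a : ℝ) : ℂ) * (η : ℂ) * ρ + (a : ℂ) * (η : ℂ) = 0 →
        ρ.im = 0 ∧ -1 < ρ.re ∧ ρ.re < 1) := by
  obtain ⟨ha0, ha1⟩ := ha
  have hq : a * η < 1 := by nlinarith
  have hs : |(1 + a) * η| < 1 + a * η := by
    rw [abs_of_nonneg (by positivity)]
    linarith
  have hroot : ∀ ρ : ℂ, ρ ^ 2 - ((1 + a : ℝ) : ℂ) * (η : ℂ) * ρ + (a : ℂ) * (η : ℂ) = 0 →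
      ρ ^ 2 - (((1 + a) * η : ℝ) : ℂ) * ρ + ((a * η : ℝ) : ℂ) = 0 := by
    intro ρ h
    push_cast at h ⊢
    exact h
  refine ⟨fun ρ h => norm_lt_one_of_sq_sub_mul_add_eq_zero (hroot ρ h) hq hs, ?_, ?_⟩
  · intro hd ρ h
    have hρ := im_ne_zero_of_discrim_neg (hroot ρ h) (by linarith)
    have hnorm := (two_mul_re_eq_and_sq_norm_eq_of_im_ne_zero (hroot ρ h) hρ).2
    have hsqrt : ‖ρ‖ = Real.sqrt (a * η) := by rw [← hnorm, Real.sqrt_sq (norm_nonneg ρ)]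
    exact ⟨hρ, hsqrt, hsqrt ▸ norm_lt_one_of_sq_sub_mul_add_eq_zero (hroot ρ h) hq hs⟩
  · intro hd ρ h
    have hρ := im_eq_zero_of_discrim_nonneg (hroot ρ h) (by linarith)
    have hre : |ρ.re| < 1 :=
      (abs_re_le_norm ρ).trans_lt (norm_lt_one_of_sq_sub_mul_add_eq_zero (hroot ρ h) hq hs)
    exact ⟨hρ, abs_lt.mp hre⟩
end

section
/- Let A ∈ ℝ^{p×n} have full column rank, let H ∈ ℝ^{n×n} be symmetric positive semi-definite, and define M = A(Id + (AᵀA)^{−1}H)^{−1}(AᵀA)^{−1}Aᵀ. Then M is firmly non-expansive, i.e., for all u, v ∈ ℝ^p, ‖Mu − Mv‖² + ‖(Id − M)u − (Id − M)v‖² ≤ ‖u − v‖². -/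
open Matrix

/-- The Euclidean norm of a finitely-indexed real vector. -/
noncomputable def euclNorm {ι : Type*} [Fintype ι] (x : ι → ℝ) : ℝ :=
  Real.sqrt (∑ i, x i ^ 2)

/-!
Writing `G = AᵀA` (positive definite, as `A` is injective) and `S = (G + H)⁻¹`, the matrix is
`M = A S Aᵀ` with `S` symmetric. Inserting `(G + H) S = 1` into `M` gives
`M - MᵀM = (A S) H (A S)ᵀ`, which is positive semi-definite. For such an `M`,
`‖Mw‖² + ‖w - Mw‖² = ‖w‖² - 2 wᵀ(M - MᵀM)w ≤ ‖w‖²`.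
-/

lemma euclNorm_sq {ι : Type*} [Fintype ι] (x : ι → ℝ) : euclNorm x ^ 2 = x ⬝ᵥ x := by
  rw [euclNorm, Real.sq_sqrt (by positivity)]
  simp only [dotProduct, sq]

namespace Matrix

variable {m n R : Type*} [Fintype m] [Fintype n]

theorem inv_one_add_inv_mul_mul_inv [DecidableEq n] [CommRing R] {G : Matrix n n R}
    (hG : IsUnit G.det) (H : Matrix n n R) :
    (1 + G⁻¹ * H)⁻¹ * G⁻¹ = (G + H)⁻¹ := by
  rw [← mul_inv_rev, Matrix.mul_add, Matrix.mul_one, ← Matrix.mul_assoc, mul_nonsing_inv _ hG,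
    Matrix.one_mul]

theorem sub_transpose_mul_self_eq_of_mul_eq_one [DecidableEq n] [CommRing R] {A : Matrix m n R}
    {H S : Matrix n n R} {M : Matrix m m R} (hM : M = A * S * Aᵀ)
    (hS : (Aᵀ * A + H) * S = 1) (hSsymm : Sᵀ = S) :
    M - Mᵀ * M = A * S * H * (A * S)ᵀ := by
  have hMt : Mᵀ = A * S * Aᵀ := by
    rw [hM, transpose_mul, transpose_mul, transpose_transpose, hSsymm, Matrix.mul_assoc]
  calc M - Mᵀ * M = A * S * ((Aᵀ * A + H) * S) * Aᵀ - A * S * Aᵀ * (A * S * Aᵀ) := by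
        rw [hS, Matrix.mul_one, hMt, ← hM]
    _ = A * S * H * (A * S)ᵀ := by
        rw [transpose_mul, hSsymm]
        simp only [Matrix.mul_add, Matrix.add_mul, Matrix.mul_assoc, add_sub_cancel_left]

theorem dotProduct_add_le_of_posSemidef_sub_transpose_mul_self {M : Matrix m m ℝ}
    (hM : (M - Mᵀ * M).PosSemidef) (w : m → ℝ) :
    M *ᵥ w ⬝ᵥ M *ᵥ w + (w - M *ᵥ w) ⬝ᵥ (w - M *ᵥ w) ≤ w ⬝ᵥ w := by
  have hq : 0 ≤ w ⬝ᵥ M *ᵥ w - M *ᵥ w ⬝ᵥ M *ᵥ w := by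
    have := hM.dotProduct_mulVec_nonneg w
    rwa [star_trivial, sub_mulVec, dotProduct_sub, ← mulVec_mulVec, dotProduct_mulVec w Mᵀ,
      vecMul_transpose] at this
  have hcomm : M *ᵥ w ⬝ᵥ w = w ⬝ᵥ M *ᵥ w := dotProduct_comm _ _
  simp only [dotProduct_sub, sub_dotProduct] at hq ⊢
  linarith

theorem euclNorm_sq_add_le_of_posSemidef_sub_transpose_mul_self {M : Matrix m m ℝ}
    (hM : (M - Mᵀ * M).PosSemidef) (u v : m → ℝ) :
    euclNorm (M *ᵥ u - M *ᵥ v) ^ 2 + euclNorm ((u - M *ᵥ u) - (v - M *ᵥ v)) ^ 2 ≤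
      euclNorm (u - v) ^ 2 := by
  have hsub : (u - M *ᵥ u) - (v - M *ᵥ v) = (u - v) - M *ᵥ (u - v) := by
    rw [mulVec_sub]; abel
  rw [hsub, ← mulVec_sub, euclNorm_sq, euclNorm_sq, euclNorm_sq]
  exact dotProduct_add_le_of_posSemidef_sub_transpose_mul_self hM (u - v)

end Matrix

/-- For `A` with full column rank and `H` symmetric positive semi-definite, the matrix
`M = A (Id + (AᵀA)⁻¹H)⁻¹ (AᵀA)⁻¹ Aᵀ` is firmly non-expansive. -/
theorem stmt6 {p n : ℕ} (A : Matrix (Fin p) (Fin n) ℝ)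
    (hA : Function.Injective A.mulVecLin)
    (H : Matrix (Fin n) (Fin n) ℝ) (hH : H.PosSemidef)
    (M : Matrix (Fin p) (Fin p) ℝ)
    (hM : M = A * (1 + (Aᵀ * A)⁻¹ * H)⁻¹ * (Aᵀ * A)⁻¹ * Aᵀ) :
    ∀ u v : Fin p → ℝ,
      euclNorm (M.mulVec u - M.mulVec v) ^ 2 +
        euclNorm ((u - M.mulVec u) - (v - M.mulVec v)) ^ 2 ≤
      euclNorm (u - v) ^ 2 := by
  have hG : (Aᵀ * A).PosDef := by
    simpa only [conjTranspose_eq_transpose_of_trivial] using PosDef.conjTranspose_mul_self A hA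
  have hK : (Aᵀ * A + H).PosDef := hG.add_posSemidef hH
  set S := (Aᵀ * A + H)⁻¹
  have hMS : M = A * S * Aᵀ := by
    rw [hM, Matrix.mul_assoc A, inv_one_add_inv_mul_mul_inv hG.det_pos.ne'.isUnit]
  have hSsymm : Sᵀ = S := by
    rw [transpose_nonsing_inv, isHermitian_iff_isSymm.mp hK.isHermitian]
  have hPSD : (M - Mᵀ * M).PosSemidef := by
    rw [sub_transpose_mul_self_eq_of_mul_eq_one hMS (mul_nonsing_inv _ hK.det_pos.ne'.isUnit)
      hSsymm, ← conjTranspose_eq_transpose_of_trivial]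
    exact hH.mul_mul_conjTranspose_same (A * S)
  exact euclNorm_sq_add_le_of_posSemidef_sub_transpose_mul_self hPSD
end

section
/- In the setting of the companion recursion above, the extrapolated point z̄_{k,s} = z_k + ∑_{i=1}^s V_k (Cᵏᵢ)_{(:,1)} (first columns of powers C^i) satisfies z̄_{k,s} = z_{k+s} + ∑_{j=1}^s (E_{k,j})_{(:,1)}, and consequently for any z*, ‖z̄_{k,s} − z*‖ ≤ ‖z_{k+s} − z*‖ + ε_k · ∑_{ℓ=1}^s ‖M^ℓ‖ |∑_{i=0}^{s−ℓ} (C^i)_{(1,1)}|, where ε_k = ‖V_{k−1}c − v_k‖. -/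
/-- The operator (spectral) norm of a real matrix, induced by the Euclidean norms. -/
noncomputable def matOpNorm {ι κ : Type*} [Fintype ι] [Fintype κ]
    (A : Matrix ι κ ℝ) : ℝ :=
  sSup {t : ℝ | ∃ x : κ → ℝ, euclNorm x ≤ 1 ∧ t = euclNorm (A.mulVec x)}

/-!
Right multiplication by the companion matrix shifts the columns of the lag matrix `V_j` one place
to the right and puts `V_j c` in front, so `V_j C = V_{j+1} + r_j e₀ᵀ` with the residual
`r_j = V_j c - v_{j+1}`. Iterating, `V_k C^ℓ - V_{k+ℓ} = ∑_{i<ℓ} r_{k+i} e₀ᵀ C^{ℓ-1-i}`, and since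
`v_{j+1} = M v_j` the residuals propagate as `r_{k+i} = M^{i+1} r_{k-1}` once every column of `V`
is past the start of the sequence (`q ≤ k`). Summing first columns over `ℓ` and exchanging the two
sums gives the identity for `z̄_{k,s}`, because `z_{k+s} - z_k` telescopes to `∑_{j=1}^s v_{k+j}`;
the bound is then the triangle inequality together with `‖M^ℓ x‖ ≤ ‖M^ℓ‖ ‖x‖`.
-/

open Finset Matrix

section Norms

open scoped Matrix.Norms.L2Operator

lemma euclNorm_eq_norm {ι : Type*} [Fintype ι] (x : ι → ℝ) :
    euclNorm x = ‖WithLp.toLp 2 x‖ := by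
  simp [euclNorm, EuclideanSpace.norm_eq]

lemma matOpNorm_eq_l2_opNorm {ι κ : Type*} [Fintype ι] [Fintype κ] [DecidableEq κ]
    (A : Matrix ι κ ℝ) : matOpNorm A = ‖A‖ := by
  rw [l2_opNorm_def, ← ContinuousLinearMap.sSup_unitClosedBall_eq_norm, matOpNorm]
  congr 1
  ext t
  simp only [Set.mem_ofPred_eq, Set.mem_image, Metric.mem_closedBall, dist_zero_right]
  constructor
  · rintro ⟨x, hx, rfl⟩
    exact ⟨WithLp.toLp 2 x, by simpa [euclNorm_eq_norm] using hx, by simp [euclNorm_eq_norm]⟩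
  · rintro ⟨x, hx, rfl⟩
    exact ⟨x.ofLp, by simpa [euclNorm_eq_norm] using hx, by rw [euclNorm_eq_norm]; rfl⟩

lemma euclNorm_mulVec_le {ι κ : Type*} [Fintype ι] [Fintype κ] [DecidableEq κ]
    (A : Matrix ι κ ℝ) (x : κ → ℝ) :
    euclNorm (A *ᵥ x) ≤ matOpNorm A * euclNorm x := by
  rw [matOpNorm_eq_l2_opNorm, euclNorm_eq_norm, euclNorm_eq_norm]
  exact l2_opNorm_mulVec A (WithLp.toLp 2 x)

lemma euclNorm_add_sum_smul_mulVec_le {ι κ α : Type*} [Fintype ι] [Fintype κ] [DecidableEq κ]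
    (x : ι → ℝ) (t : Finset α) (a : α → ℝ) (B : α → Matrix ι κ ℝ) (e : κ → ℝ) :
    euclNorm (x + ∑ l ∈ t, a l • B l *ᵥ e) ≤
      euclNorm x + euclNorm e * ∑ l ∈ t, matOpNorm (B l) * |a l| := by
  have hsmul (l : α) : euclNorm (a l • B l *ᵥ e) = |a l| * euclNorm (B l *ᵥ e) := by
    simp only [euclNorm_eq_norm, WithLp.toLp_smul, norm_smul, Real.norm_eq_abs]
  calc euclNorm (x + ∑ l ∈ t, a l • B l *ᵥ e)
      ≤ euclNorm x + ∑ l ∈ t, euclNorm (a l • B l *ᵥ e) := by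
        simp only [euclNorm_eq_norm, WithLp.toLp_add, WithLp.toLp_sum]
        exact (norm_add_le _ _).trans (add_le_add_right (norm_sum_le _ _) _)
    _ ≤ euclNorm x + ∑ l ∈ t, |a l| * (matOpNorm (B l) * euclNorm e) := by
        simp only [hsmul]
        gcongr
        exact euclNorm_mulVec_le _ _
    _ = euclNorm x + euclNorm e * ∑ l ∈ t, matOpNorm (B l) * |a l| := by
        rw [mul_sum]
        congr 1
        exact sum_congr rfl fun l _ => by ring

end Norms

lemma sum_Icc_one_eq_sum_range {M : Type*} [AddCommMonoid M] (f : ℕ → M) (s : ℕ) :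
    ∑ j ∈ Icc 1 s, f j = ∑ j ∈ range s, f (j + 1) := by
  induction s with
  | zero => simp
  | succ s ih => rw [sum_Icc_succ_top (by omega), ih, sum_range_succ]

lemma sum_Icc_eq_sub_of_sub_eq {G : Type*} [AddCommGroup G] {z v : ℕ → G}
    (h : ∀ j, z (j + 1) - z j = v (j + 1)) (k s : ℕ) :
    ∑ j ∈ Icc 1 s, v (k + j) = z (k + s) - z k := by
  have htele := sum_range_sub (fun i => z (k + i)) s
  rw [Nat.add_zero] at htele
  rw [sum_Icc_one_eq_sum_range, ← htele]
  exact sum_congr rfl fun j _ => (h (k + j)).symm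

section PowerExpansion

variable {R : Type*} [CommRing R] {m p : Type*} [Fintype p] [DecidableEq p]

theorem mul_pow_succ_eq_add_sum_vecMulVec {A : ℕ → Matrix m p R} {C : Matrix p p R}
    {r : ℕ → m → R} {u : p → R} (h : ∀ j, A j * C = A (j + 1) + vecMulVec (r j) u) (j : ℕ) :
    A 0 * C ^ (j + 1) = A (j + 1) + ∑ i ∈ range (j + 1), vecMulVec (r i) (u ᵥ* C ^ (j - i)) := by
  induction j with
  | zero => simp [h]
  | succ j ih =>
    have hshift : ∀ i ∈ range (j + 1),
        vecMulVec (r i) (u ᵥ* C ^ (j - i)) * C = vecMulVec (r i) (u ᵥ* C ^ (j + 1 - i)) := by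
      intro i hi
      rw [vecMulVec_mul, vecMul_vecMul, ← pow_succ,
        show j - i + 1 = j + 1 - i by have := mem_range.mp hi; omega]
    rw [pow_succ, ← Matrix.mul_assoc, ih, Matrix.add_mul, h, Matrix.sum_mul, sum_congr rfl hshift,
      sum_range_succ _ (j + 1), Nat.sub_self, pow_zero, vecMul_one]
    abel

theorem sum_col_mul_pow_succ_sub {A : ℕ → Matrix m p R} {C : Matrix p p R}
    {r : ℕ → m → R} {o : p} (h : ∀ j, A j * C = A (j + 1) + vecMulVec (r j) (Pi.single o 1))
    (s : ℕ) :
    ∑ j ∈ range s, (A 0 * C ^ (j + 1) - A (j + 1)).col o =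
      ∑ i ∈ range s, (∑ t ∈ range (s - i), (C ^ t) o o) • r i := by
  have hcol (j : ℕ) : (A 0 * C ^ (j + 1) - A (j + 1)).col o =
      ∑ i ∈ range (j + 1), (C ^ (j - i)) o o • r i := by
    ext a
    rw [mul_pow_succ_eq_add_sum_vecMulVec h]
    simp [Matrix.sum_apply, vecMulVec_apply, mul_comm]
  simp only [hcol, sum_smul]
  exact sum_range_diag_flip s fun i t => (C ^ t) o o • r i

end PowerExpansion

section Companion

variable {R : Type*} [Ring R] {n q : ℕ}

/-- The paper's `V_m = [v_m, …, v_{m-q+1}]`; for `m < q - 1` the truncated subtraction repeats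
`v 0` in the trailing columns. -/
def lagMatrix (q : ℕ) (v : ℕ → Fin n → R) (m : ℕ) : Matrix (Fin n) (Fin q) R :=
  Matrix.of fun i l => v (m - l) i

def companion (c : Fin q → R) : Matrix (Fin q) (Fin q) R :=
  Matrix.of fun i j => if (j : ℕ) = 0 then c i else if (i : ℕ) + 1 = j then 1 else 0

lemma lagMatrix_mul_companion [NeZero q] (v : ℕ → Fin n → R) (c : Fin q → R) (m : ℕ) :
    lagMatrix q v m * companion c =
      lagMatrix q v (m + 1) + vecMulVec (lagMatrix q v m *ᵥ c - v (m + 1)) (Pi.single 0 1) := by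
  ext a l
  by_cases hl : (l : ℕ) = 0
  · obtain rfl : l = 0 := Fin.ext hl
    simp [Matrix.mul_apply, lagMatrix, companion, vecMulVec_apply, mulVec, dotProduct]
  · have hl' : (l : ℕ) - 1 < q := by omega
    have hne : l ≠ 0 := fun h => hl (by simp [h])
    rw [Matrix.add_apply, vecMulVec_apply, Pi.single_eq_of_ne hne, mul_zero, add_zero,
      Matrix.mul_apply, sum_eq_single ⟨l - 1, hl'⟩]
    · simp [lagMatrix, companion, hne, show (l : ℕ) - 1 + 1 = l by omega,
        show m - ((l : ℕ) - 1) = m + 1 - l by omega]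
    · intro p _ hp
      have : (p : ℕ) + 1 ≠ l := fun h => hp (Fin.ext (by simp; omega))
      simp [companion, hne, this]
    · simp

lemma lagMatrix_succ_eq_mul {v : ℕ → Fin n → R} {M : Matrix (Fin n) (Fin n) R}
    (hv : ∀ j, v (j + 1) = M *ᵥ v j) {m : ℕ} (hm : q ≤ m + 1) :
    lagMatrix q v (m + 1) = M * lagMatrix q v m := by
  ext a l
  rw [Matrix.mul_apply]
  simp only [lagMatrix, of_apply]
  rw [show m + 1 - l = m - l + 1 by omega, hv]
  rfl

lemma lagMatrix_mulVec_sub_eq_pow_mulVec {v : ℕ → Fin n → R} {M : Matrix (Fin n) (Fin n) R}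
    (hv : ∀ j, v (j + 1) = M *ᵥ v j) (c : Fin q → R) {m : ℕ} (hm : q ≤ m + 1) (j : ℕ) :
    lagMatrix q v (m + j) *ᵥ c - v (m + j + 1) =
      (M ^ j) *ᵥ (lagMatrix q v m *ᵥ c - v (m + 1)) := by
  induction j with
  | zero => simp
  | succ j ih =>
    rw [← add_assoc, lagMatrix_succ_eq_mul hv (by omega), hv (m + j + 1), ← mulVec_mulVec,
      ← Matrix.mulVec_sub, ih, mulVec_mulVec, pow_succ']

end Companion

theorem sum_Icc_col_lagMatrix_mul_companion_pow_sub {R : Type*} [CommRing R] {n q : ℕ}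
    [NeZero q] {v : ℕ → Fin n → R} {M : Matrix (Fin n) (Fin n) R} (hv : ∀ j, v (j + 1) = M *ᵥ v j)
    (c : Fin q → R) {k : ℕ} (hk : q ≤ k) (s : ℕ) :
    ∑ j ∈ Icc 1 s, (lagMatrix q v k * companion c ^ j - lagMatrix q v (k + j)).col 0 =
      ∑ l ∈ Icc 1 s, (∑ i ∈ range (s - l + 1), (companion c ^ i) 0 0) •
        (M ^ l) *ᵥ (lagMatrix q v (k - 1) *ᵥ c - v k) := by
  have hk1 : k - 1 + 1 = k := Nat.sub_add_cancel (le_trans NeZero.one_le hk)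
  have hres (j : ℕ) : lagMatrix q v (k + j) *ᵥ c - v (k + j + 1) =
      (M ^ (j + 1)) *ᵥ (lagMatrix q v (k - 1) *ᵥ c - v k) := by
    have := lagMatrix_mulVec_sub_eq_pow_mulVec hv c (m := k - 1) (by omega) (j + 1)
    rwa [show k - 1 + (j + 1) = k + j by omega, hk1] at this
  have hshift (j : ℕ) : lagMatrix q v (k + j) * companion c = lagMatrix q v (k + (j + 1)) +
      vecMulVec ((M ^ (j + 1)) *ᵥ (lagMatrix q v (k - 1) *ᵥ c - v k)) (Pi.single 0 1) := by
    rw [lagMatrix_mul_companion, hres]; rfl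
  rw [sum_Icc_one_eq_sum_range, sum_Icc_one_eq_sum_range]
  have := sum_col_mul_pow_succ_sub (A := fun j => lagMatrix q v (k + j)) hshift s
  simp only [add_zero] at this
  rw [this]
  refine sum_congr rfl fun i hi => ?_
  rw [show s - (i + 1) + 1 = s - i by have := mem_range.mp hi; omega]

/-- The extrapolated point `z̄_{k,s} = z_k + ∑_{i=1}^s (V_k C^i)_{(:,1)}` equals
`z_{k+s} + ∑_{j=1}^s (E_{k,j})_{(:,1)}`, and hence for any `z*`,
`‖z̄_{k,s} − z*‖ ≤ ‖z_{k+s} − z*‖ + ε_k ∑_{ℓ=1}^s ‖M^ℓ‖ |∑_{i=0}^{s−ℓ} (C^i)_{(1,1)}|`,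
where `ε_k = ‖V_{k−1} c − v_k‖`. -/
theorem stmt10 {n q : ℕ} (hq : 1 ≤ q)
    (M : Matrix (Fin n) (Fin n) ℝ)
    (z v : ℕ → Fin n → ℝ)
    (hv : ∀ j : ℕ, v (j + 1) = M.mulVec (v j))
    (hzv : ∀ j : ℕ, z (j + 1) - z j = v (j + 1))
    (c : Fin q → ℝ) (k s : ℕ) (hk : q ≤ k)
    (C : Matrix (Fin q) (Fin q) ℝ)
    (hC : C = Matrix.of fun i j : Fin q =>
        if (j : ℕ) = 0 then c i else if (i : ℕ) + 1 = (j : ℕ) then 1 else 0)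
    (V : ℕ → Matrix (Fin n) (Fin q) ℝ)
    (hV : ∀ m : ℕ, V m = Matrix.of fun (i : Fin n) (l : Fin q) => v (m - (l : ℕ)) i)
    (zbar : Fin n → ℝ)
    (hzbar : zbar = z k + ∑ i ∈ Finset.Icc 1 s,
        (fun a : Fin n => (V k * C ^ i) a ⟨0, hq⟩)) :
    (zbar = z (k + s) + ∑ j ∈ Finset.Icc 1 s,
        (fun a : Fin n => (V k * C ^ j - V (k + j)) a ⟨0, hq⟩)) ∧
    ∀ zs : Fin n → ℝ,
      euclNorm (zbar - zs) ≤ euclNorm (z (k + s) - zs) +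
        euclNorm (Matrix.mulVec (V (k - 1)) c - v k) *
          ∑ l ∈ Finset.Icc 1 s, matOpNorm (M ^ l) *
            |∑ i ∈ Finset.range (s - l + 1), (C ^ i) ⟨0, hq⟩ ⟨0, hq⟩| := by
  have : NeZero q := ⟨by omega⟩
  have hcol (B : Matrix (Fin n) (Fin q) ℝ) : (fun a => B a ⟨0, hq⟩) = B.col 0 := rfl
  obtain rfl : V = lagMatrix q v := funext hV
  obtain rfl : C = companion c := hC
  simp only [hcol] at hzbar ⊢
  have hE := sum_Icc_col_lagMatrix_mul_companion_pow_sub hv c hk s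
  have hdiff (j : ℕ) : (lagMatrix q v k * companion c ^ j - lagMatrix q v (k + j)).col 0 =
      (lagMatrix q v k * companion c ^ j).col 0 - v (k + j) := by
    ext; simp [lagMatrix]
  have hzbar' : zbar = z (k + s) + ∑ j ∈ Icc 1 s,
      (lagMatrix q v k * companion c ^ j - lagMatrix q v (k + j)).col 0 := by
    rw [hzbar, sum_congr rfl fun j _ => hdiff j, sum_sub_distrib, sum_Icc_eq_sub_of_sub_eq hzv]
    abel
  refine ⟨hzbar', fun zs => ?_⟩
  rw [hzbar', add_sub_right_comm, hE]
  exact euclNorm_add_sum_smul_mulVec_le _ _ _ _ _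
end

section
/- Let T ∈ ℝ^{n×n} be a normal matrix that is an orthogonal conjugate of the block-diagonal matrix diag(B₁, …, B_r, 0_{n−2r}) where B_i = cos(ζ_i)[[cos ζ_i, sin ζ_i],[−sin ζ_i, cos ζ_i]] and 0 < ζ₁ = … = ζ_e < ζ_{e+1} ≤ … ≤ ζ_r < π/2. Let v₀ ∈ ℝ^n be such that its component in the kernel block is zero, with nonzero component in the first 2e coordinates (after conjugation), and define v_k = T^k v₀ and θ_k = arccos(⟨v_k, v_{k−1}⟩/(‖v_k‖‖v_{k−1}‖)). Then cos(θ_k) = cos(ζ₁) + O(η^{2k}) with η = cos(ζ_{e+1})/cos(ζ₁); in particular cos(θ_k) → cos(ζ₁). -/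
/-!
In the coordinates `w = U v₀` the iteration acts blockwise, and each block `B = cos ζ · R_ζ`
(with `R_ζ` a rotation) satisfies `Bᵀ B = cos² ζ · 1` and `⟪B x, x⟫ = cos² ζ ‖x‖²`.
Hence `‖v_k‖² = S k` and `⟪v_{k+1}, v_k⟫ = S (k + 1)` for the power sum
`S k = ∑ᵢ (cos² ζᵢ)ᵏ ‖wᵢ‖²`, so that `cos θ_{k+1} = √(S (k + 1) / S k)`.
In `S (k + 1) - cos² ζ₁ · S k` the dominant blocks `i < e` cancel, leaving `O((cos² ζ_{e+1})ᵏ)`,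
while `S k ≥ (cos² ζ₁)ᵏ ∑_{i < e} ‖wᵢ‖²` with a positive weight.
-/

open Matrix

open Filter Topology

section Conformal

variable {n R : Type*} [Fintype n] [DecidableEq n] [CommRing R]

theorem mulVec_dotProduct_mulVec_of_transpose_mul_self {M : Matrix n n R} {c : R}
    (hM : Mᵀ * M = c • 1) (x y : n → R) : (M *ᵥ x) ⬝ᵥ (M *ᵥ y) = c * (x ⬝ᵥ y) := by
  rw [dotProduct_comm, dotProduct_mulVec, ← mulVec_transpose, mulVec_mulVec, hM, smul_mulVec,
    one_mulVec, smul_dotProduct, smul_eq_mul, dotProduct_comm]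

theorem pow_add_mulVec_dotProduct_pow_mulVec {M : Matrix n n R} {c : R}
    (hM : Mᵀ * M = c • 1) (x y : n → R) (k j : ℕ) :
    (M ^ (k + j) *ᵥ x) ⬝ᵥ (M ^ k *ᵥ y) = c ^ k * ((M ^ j *ᵥ x) ⬝ᵥ y) := by
  induction k with
  | zero => simp
  | succ k ih =>
    rw [Nat.add_right_comm, pow_succ', pow_succ', ← mulVec_mulVec, ← mulVec_mulVec,
      mulVec_dotProduct_mulVec_of_transpose_mul_self hM, ih, pow_succ']
    ring

end Conformal

noncomputable def rotScale (θ : ℝ) : Matrix (Fin 2) (Fin 2) ℝ :=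
  Real.cos θ • !![Real.cos θ, Real.sin θ; -Real.sin θ, Real.cos θ]

theorem rotScale_transpose_mul_self (θ : ℝ) :
    (rotScale θ)ᵀ * rotScale θ = Real.cos θ ^ 2 • 1 := by
  ext i j
  fin_cases i <;> fin_cases j <;> simp [rotScale, Matrix.mul_apply, Fin.sum_univ_two] <;>
    first | linear_combination Real.cos θ ^ 2 * Real.sin_sq_add_cos_sq θ | ring

theorem rotScale_mulVec_dotProduct_self (θ : ℝ) (x : Fin 2 → ℝ) :
    (rotScale θ *ᵥ x) ⬝ᵥ x = Real.cos θ ^ 2 * (x ⬝ᵥ x) := by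
  simp [rotScale, mulVec, dotProduct, Fin.sum_univ_two]
  ring

theorem rotScale_pow_mulVec_dotProduct_self (θ : ℝ) (x : Fin 2 → ℝ) (k : ℕ) :
    (rotScale θ ^ k *ᵥ x) ⬝ᵥ (rotScale θ ^ k *ᵥ x) = (Real.cos θ ^ 2) ^ k * (x ⬝ᵥ x) := by
  simpa using pow_add_mulVec_dotProduct_pow_mulVec (rotScale_transpose_mul_self θ) x x k 0

theorem rotScale_pow_succ_mulVec_dotProduct (θ : ℝ) (x : Fin 2 → ℝ) (k : ℕ) :
    (rotScale θ ^ (k + 1) *ᵥ x) ⬝ᵥ (rotScale θ ^ k *ᵥ x) =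
      (Real.cos θ ^ 2) ^ (k + 1) * (x ⬝ᵥ x) := by
  rw [pow_add_mulVec_dotProduct_pow_mulVec (rotScale_transpose_mul_self θ), pow_one,
    rotScale_mulVec_dotProduct_self, pow_succ]
  ring

section Blocks

variable {R : Type*} [CommRing R]

theorem transpose_mul_mul_pow_mulVec_dotProduct {n : Type*} [Fintype n] [DecidableEq n]
    {U : Matrix n n R} (hUo : Uᵀ * U = 1) (hUo' : U * Uᵀ = 1) (D : Matrix n n R)
    (v : n → R) (a b : ℕ) :
    ((Uᵀ * D * U) ^ a *ᵥ v) ⬝ᵥ ((Uᵀ * D * U) ^ b *ᵥ v) =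
      (D ^ a *ᵥ (U *ᵥ v)) ⬝ᵥ (D ^ b *ᵥ (U *ᵥ v)) := by
  have hconj (k : ℕ) : (Uᵀ * D * U) ^ k = Uᵀ * D ^ k * U :=
    Units.conj_pow ⟨Uᵀ, U, hUo, hUo'⟩ D k
  have hisom (x y : n → R) : (Uᵀ *ᵥ x) ⬝ᵥ (Uᵀ *ᵥ y) = x ⬝ᵥ y := by
    rw [dotProduct_mulVec, ← mulVec_transpose, transpose_transpose, mulVec_mulVec, hUo',
      one_mulVec]
  simp only [hconj, ← mulVec_mulVec, hisom]

theorem fromBlocks_zero_pow_mulVec_sumElim {l m : Type*} [Fintype l] [DecidableEq l]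
    [Fintype m] [DecidableEq m] (A : Matrix l l R) (x : l → R) (k : ℕ) :
    fromBlocks A 0 0 (0 : Matrix m m R) ^ k *ᵥ Sum.elim x 0 = Sum.elim (A ^ k *ᵥ x) 0 := by
  rw [fromBlocks_diagonal_pow, fromBlocks_mulVec]
  simp

theorem blockDiagonal_mulVec_apply {o ι : Type*} [Fintype o] [Fintype ι] [DecidableEq ι]
    (g : ι → Matrix o o R) (x : o × ι → R) (p : o) (i : ι) :
    (blockDiagonal g *ᵥ x) (p, i) = (g i *ᵥ fun q => x (q, i)) p := by
  simp [mulVec, dotProduct, blockDiagonal_apply, Fintype.sum_prod_type, ite_mul]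

theorem blockDiagonal_mulVec_dotProduct {o ι : Type*} [Fintype o] [Fintype ι] [DecidableEq ι]
    (g h : ι → Matrix o o R) (x y : o × ι → R) :
    (blockDiagonal g *ᵥ x) ⬝ᵥ (blockDiagonal h *ᵥ y) =
      ∑ i, (g i *ᵥ fun q => x (q, i)) ⬝ᵥ (h i *ᵥ fun q => y (q, i)) := by
  simp only [dotProduct, Fintype.sum_prod_type, blockDiagonal_mulVec_apply]
  exact Finset.sum_comm

theorem transpose_mul_fromBlocks_mul_pow_mulVec_dotProduct {ι o m : Type*}
    [Fintype ι] [DecidableEq ι] [Fintype o] [DecidableEq o] [Fintype m] [DecidableEq m]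
    (f : ι → Matrix o o R) {U : Matrix (o × ι ⊕ m) (o × ι ⊕ m) R} (hUo : Uᵀ * U = 1)
    (hUo' : U * Uᵀ = 1) {v : o × ι ⊕ m → R} {y : o × ι → R} (hvy : U *ᵥ v = Sum.elim y 0)
    (a b : ℕ) :
    ((Uᵀ * fromBlocks (blockDiagonal f) 0 0 (0 : Matrix m m R) * U) ^ a *ᵥ v) ⬝ᵥ
        ((Uᵀ * fromBlocks (blockDiagonal f) 0 0 (0 : Matrix m m R) * U) ^ b *ᵥ v) =
      ∑ i, (f i ^ a *ᵥ fun q => y (q, i)) ⬝ᵥ (f i ^ b *ᵥ fun q => y (q, i)) := by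
  rw [transpose_mul_mul_pow_mulVec_dotProduct hUo hUo', hvy, fromBlocks_zero_pow_mulVec_sumElim,
    fromBlocks_zero_pow_mulVec_sumElim, sumElim_dotProduct_sumElim, dotProduct_zero, add_zero,
    ← blockDiagonal_pow, ← blockDiagonal_pow, blockDiagonal_mulVec_dotProduct]
  rfl

end Blocks

section PowerSum

variable {ι : Type*} [Fintype ι]

def powerSum (lam a : ι → ℝ) (k : ℕ) : ℝ := ∑ i, lam i ^ k * a i

variable {lam a : ι → ℝ}

theorem powerSum_nonneg (ha : ∀ i, 0 ≤ a i) (hlam : ∀ i, 0 ≤ lam i) (k : ℕ) :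
    0 ≤ powerSum lam a k :=
  Finset.sum_nonneg fun i _ => mul_nonneg (pow_nonneg (hlam i) k) (ha i)

theorem pow_mul_le_powerSum (ha : ∀ i, 0 ≤ a i) (hlam : ∀ i, 0 ≤ lam i) (i : ι) (k : ℕ) :
    lam i ^ k * a i ≤ powerSum lam a k :=
  Finset.single_le_sum (fun j _ => mul_nonneg (pow_nonneg (hlam j) k) (ha j))
    (Finset.mem_univ i)

theorem abs_powerSum_succ_sub_mul_le {μ ν : ℝ} (ha : ∀ i, 0 ≤ a i) (hlam : ∀ i, 0 ≤ lam i)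
    (hν : 0 ≤ ν) (hνμ : ν ≤ μ) (hgap : ∀ i, lam i = μ ∨ lam i ≤ ν) (k : ℕ) :
    |powerSum lam a (k + 1) - μ * powerSum lam a k| ≤ μ * ν ^ k * ∑ i, a i := by
  have hterm (i : ι) : |(lam i - μ) * lam i ^ k * a i| ≤ μ * ν ^ k * a i := by
    rcases hgap i with h | h
    · simp only [h, sub_self, zero_mul, abs_zero]
      exact mul_nonneg (mul_nonneg (hν.trans hνμ) (pow_nonneg hν k)) (ha i)
    · rw [abs_mul, abs_mul, abs_of_nonneg (ha i), abs_of_nonneg (pow_nonneg (hlam i) k),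
        abs_of_nonpos (by linarith)]
      exact mul_le_mul_of_nonneg_right (mul_le_mul (by linarith [hlam i])
        (pow_le_pow_left₀ (hlam i) h k) (pow_nonneg (hlam i) k) (hν.trans hνμ)) (ha i)
  calc |powerSum lam a (k + 1) - μ * powerSum lam a k|
      = |∑ i, (lam i - μ) * lam i ^ k * a i| := by
        simp only [powerSum, Finset.mul_sum, ← Finset.sum_sub_distrib]
        congr 1
        exact Finset.sum_congr rfl fun i _ => by ring
    _ ≤ ∑ i, μ * ν ^ k * a i :=
        (Finset.abs_sum_le_sum_abs _ _).trans (Finset.sum_le_sum fun i _ => hterm i)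
    _ = μ * ν ^ k * ∑ i, a i := (Finset.mul_sum _ _ _).symm

theorem exists_abs_powerSum_div_sub_le {μ ν : ℝ} (ha : ∀ i, 0 ≤ a i) (hlam : ∀ i, 0 ≤ lam i)
    (hμ : 0 < μ) (hν : 0 ≤ ν) (hνμ : ν ≤ μ) (hgap : ∀ i, lam i = μ ∨ lam i ≤ ν)
    (htop : ∃ i, lam i = μ ∧ 0 < a i) :
    ∃ K, ∀ k, |powerSum lam a (k + 1) / powerSum lam a k - μ| ≤ K * (ν / μ) ^ k := by
  obtain ⟨i₀, hi₀, ha₀⟩ := htop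
  refine ⟨μ * (∑ i, a i) / a i₀, fun k => ?_⟩
  have hlow : μ ^ k * a i₀ ≤ powerSum lam a k := hi₀ ▸ pow_mul_le_powerSum ha hlam i₀ k
  have hpos : 0 < μ ^ k * a i₀ := by positivity
  have hsum : 0 ≤ ∑ i, a i := Finset.sum_nonneg fun i _ => ha i
  rw [div_sub' (hpos.trans_le hlow).ne', abs_div, abs_of_pos (hpos.trans_le hlow), mul_comm _ μ]
  calc |powerSum lam a (k + 1) - μ * powerSum lam a k| / powerSum lam a k
      ≤ μ * ν ^ k * (∑ i, a i) / (μ ^ k * a i₀) :=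
        div_le_div₀ (by positivity) (abs_powerSum_succ_sub_mul_le ha hlam hν hνμ hgap k)
          hpos hlow
    _ = μ * (∑ i, a i) / a i₀ * (ν / μ) ^ k := by
        rw [div_pow]
        field_simp

theorem abs_sqrt_sub_le {q c : ℝ} (hq : 0 ≤ q) (hc : 0 < c) : |√q - c| ≤ |q - c ^ 2| / c := by
  have hfactor : q - c ^ 2 = (√q - c) * (√q + c) := by
    linear_combination -Real.mul_self_sqrt hq
  rw [le_div_iff₀ hc, hfactor, abs_mul, abs_of_pos (by positivity : 0 < √q + c)]
  exact mul_le_mul_of_nonneg_left (by linarith [Real.sqrt_nonneg q]) (abs_nonneg _)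

theorem exists_abs_sqrt_powerSum_div_sub_le {c d : ℝ} (ha : ∀ i, 0 ≤ a i)
    (hlam : ∀ i, 0 ≤ lam i) (hc : 0 < c) (hd : 0 ≤ d) (hdc : d ≤ c)
    (hgap : ∀ i, lam i = c ^ 2 ∨ lam i ≤ d ^ 2) (htop : ∃ i, lam i = c ^ 2 ∧ 0 < a i) :
    ∃ K, ∀ k, |√(powerSum lam a (k + 1) / powerSum lam a k) - c| ≤ K * (d / c) ^ (2 * k) := by
  obtain ⟨K, hK⟩ := exists_abs_powerSum_div_sub_le ha hlam (pow_pos hc 2) (sq_nonneg d)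
    (pow_le_pow_left₀ hd hdc 2) hgap htop
  refine ⟨K / c, fun k => ?_⟩
  calc _ ≤ _ := abs_sqrt_sub_le (div_nonneg (powerSum_nonneg ha hlam _)
          (powerSum_nonneg ha hlam _)) hc
    _ ≤ K * (d ^ 2 / c ^ 2) ^ k / c := div_le_div_of_nonneg_right (hK k) hc.le
    _ = K / c * (d / c) ^ (2 * k) := by rw [← div_pow, pow_mul]; ring

end PowerSum

theorem pow_mulVec_dotProduct_eq_powerSum {ι m : Type*} [Fintype ι] [DecidableEq ι] [Fintype m]
    [DecidableEq m] (ζ : ι → ℝ) {U T : Matrix (Fin 2 × ι ⊕ m) (Fin 2 × ι ⊕ m) ℝ}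
    (hUo : Uᵀ * U = 1) (hUo' : U * Uᵀ = 1)
    (hT : T = Uᵀ * fromBlocks (blockDiagonal fun i => rotScale (ζ i)) 0 0 (0 : Matrix m m ℝ) * U)
    {v : Fin 2 × ι ⊕ m → ℝ} {y : Fin 2 × ι → ℝ} (hvy : U *ᵥ v = Sum.elim y 0) (k : ℕ) :
    (T ^ k *ᵥ v) ⬝ᵥ (T ^ k *ᵥ v) = powerSum (fun i => Real.cos (ζ i) ^ 2)
        (fun i => (fun q => y (q, i)) ⬝ᵥ (fun q => y (q, i))) k ∧
      (T ^ (k + 1) *ᵥ v) ⬝ᵥ (T ^ k *ᵥ v) = powerSum (fun i => Real.cos (ζ i) ^ 2)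
        (fun i => (fun q => y (q, i)) ⬝ᵥ (fun q => y (q, i))) (k + 1) := by
  subst hT
  simp only [transpose_mul_fromBlocks_mul_pow_mulVec_dotProduct _ hUo hUo' hvy, powerSum]
  exact ⟨Finset.sum_congr rfl fun i _ => rotScale_pow_mulVec_dotProduct_self _ _ k,
    Finset.sum_congr rfl fun i _ => rotScale_pow_succ_mulVec_dotProduct _ _ k⟩

theorem euclNorm_eq_sqrt_dotProduct {ι : Type*} [Fintype ι] (x : ι → ℝ) :
    euclNorm x = √(x ⬝ᵥ x) := by
  simp only [euclNorm, dotProduct, sq]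

theorem div_sqrt_mul_sqrt {x : ℝ} (hx : 0 ≤ x) (y : ℝ) : x / (√x * √y) = √(x / y) := by
  rw [← div_div, Real.div_sqrt, Real.sqrt_div hx]

theorem exists_bound_and_tendsto_of_abs_succ_sub_le {x : ℕ → ℝ} {L K η : ℝ} (hη0 : 0 < η)
    (hη1 : η < 1) (h : ∀ j, |x (j + 1) - L| ≤ K * η ^ (2 * j)) :
    (∃ K', ∀ k, 1 ≤ k → |x k - L| ≤ K' * η ^ (2 * k)) ∧ Tendsto x atTop (𝓝 L) := by
  have hbound : ∀ k, 1 ≤ k → |x k - L| ≤ K / η ^ 2 * η ^ (2 * k) := by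
    intro k hk
    obtain ⟨j, rfl⟩ := Nat.exists_eq_add_of_le' hk
    calc |x (j + 1) - L| ≤ K * η ^ (2 * j) := h j
      _ = K / η ^ 2 * η ^ (2 * (j + 1)) := by
        rw [mul_add, pow_add]
        field_simp
  refine ⟨⟨_, hbound⟩, ?_⟩
  have hgeom : Tendsto (fun k => K / η ^ 2 * η ^ (2 * k)) atTop (𝓝 0) := by
    simpa [pow_mul] using (tendsto_pow_atTop_nhds_zero_of_lt_one (by positivity)
      (pow_lt_one₀ hη0.le hη1 two_ne_zero)).const_mul (K / η ^ 2)
  rw [tendsto_iff_dist_tendsto_zero]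
  refine squeeze_zero' (.of_forall fun k => dist_nonneg) ?_ hgeom
  filter_upwards [eventually_ge_atTop 1] with k hk
  exact hbound k hk

theorem cos_sq_eq_or_le_of_monotone {r : ℕ} {ζ : Fin r → ℝ} {i₀ i₁ : Fin r}
    (hpos : ∀ i, 0 < ζ i) (hhalf : ∀ i, ζ i < Real.pi / 2) (hmono : ∀ i j, i ≤ j → ζ i ≤ ζ j)
    (hconst : ∀ i : Fin r, (i : ℕ) < i₁ → ζ i = ζ i₀) (i : Fin r) :
    Real.cos (ζ i) ^ 2 = Real.cos (ζ i₀) ^ 2 ∨ Real.cos (ζ i) ^ 2 ≤ Real.cos (ζ i₁) ^ 2 := by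
  by_cases hi : (i : ℕ) < i₁
  · exact .inl (by rw [hconst i hi])
  · refine .inr (pow_le_pow_left₀ (Real.cos_nonneg_of_mem_Icc ⟨?_, (hhalf i).le⟩) ?_ 2)
    · linarith [hpos i, Real.pi_pos]
    · exact Real.cos_le_cos_of_nonneg_of_le_pi (hpos i₁).le (by linarith [hhalf i, Real.pi_pos])
        (hmono _ _ (not_lt.mp hi))

/-- For a normal matrix `T` which is an orthogonal conjugate of the block-diagonal matrix
`diag(B₁, …, B_r, 0)` with `B_i = cos ζᵢ [[cos ζᵢ, sin ζᵢ],[−sin ζᵢ, cos ζᵢ]]`,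
`0 < ζ₁ = … = ζ_e < ζ_{e+1} ≤ … ≤ ζ_r < π/2`, and a starting vector `v₀` with zero
component in the kernel block and nonzero component in the first `2e` coordinates, the
angles `θ_k` between `v_k = T^k v₀` and `v_{k−1}` satisfy
`cos θ_k = cos ζ₁ + O(η^{2k})` with `η = cos ζ_{e+1}/cos ζ₁`; in particular
`cos θ_k → cos ζ₁`. -/
theorem stmt15 {r m e : ℕ} (her : e < r)
    (ζ : Fin r → ℝ)
    (hpos : ∀ i, 0 < ζ i) (hhalf : ∀ i, ζ i < Real.pi / 2)
    (hmono : ∀ i j : Fin r, i ≤ j → ζ i ≤ ζ j)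
    (hconst : ∀ i : Fin r, (i : ℕ) < e → ζ i = ζ ⟨0, by omega⟩)
    (hgap : ζ ⟨0, by omega⟩ < ζ ⟨e, her⟩)
    (U T : Matrix ((Fin 2 × Fin r) ⊕ Fin m) ((Fin 2 × Fin r) ⊕ Fin m) ℝ)
    (hUo : Uᵀ * U = 1) (hUo' : U * Uᵀ = 1)
    (hT : T = Uᵀ *
      (Matrix.fromBlocks
        (Matrix.blockDiagonal (fun i : Fin r => Real.cos (ζ i) •
          !![Real.cos (ζ i), Real.sin (ζ i); -Real.sin (ζ i), Real.cos (ζ i)]))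
        0 0 (0 : Matrix (Fin m) (Fin m) ℝ)) * U)
    (v0 : (Fin 2 × Fin r) ⊕ Fin m → ℝ)
    (hker : ∀ j : Fin m, U.mulVec v0 (Sum.inr j) = 0)
    (hnz : ∃ p : Fin 2 × Fin r, (p.2 : ℕ) < e ∧ U.mulVec v0 (Sum.inl p) ≠ 0) :
    (∃ K : ℝ, ∀ k : ℕ, 1 ≤ k →
      |((T ^ k).mulVec v0 ⬝ᵥ (T ^ (k - 1)).mulVec v0) /
          (euclNorm ((T ^ k).mulVec v0) * euclNorm ((T ^ (k - 1)).mulVec v0)) -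
        Real.cos (ζ ⟨0, by omega⟩)| ≤
        K * (Real.cos (ζ ⟨e, her⟩) / Real.cos (ζ ⟨0, by omega⟩)) ^ (2 * k)) ∧
    Filter.Tendsto (fun k : ℕ =>
        ((T ^ k).mulVec v0 ⬝ᵥ (T ^ (k - 1)).mulVec v0) /
          (euclNorm ((T ^ k).mulVec v0) * euclNorm ((T ^ (k - 1)).mulVec v0)))
      Filter.atTop (nhds (Real.cos (ζ ⟨0, by omega⟩))) := by
  set c₁ := Real.cos (ζ ⟨0, by omega⟩)
  set cₑ := Real.cos (ζ ⟨e, her⟩)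
  have hcos_pos (i : Fin r) : 0 < Real.cos (ζ i) :=
    Real.cos_pos_of_mem_Ioo ⟨by linarith [hpos i, Real.pi_pos], hhalf i⟩
  have hcos_lt : cₑ < c₁ :=
    Real.cos_lt_cos_of_nonneg_of_le_pi (hpos _).le (by linarith [hhalf ⟨e, her⟩, Real.pi_pos]) hgap
  set y : Fin 2 × Fin r → ℝ := fun p => (U *ᵥ v0) (Sum.inl p)
  have hvy : U *ᵥ v0 = Sum.elim y 0 :=
    (Sum.elim_comp_inl_inr _).symm.trans (congrArg _ (funext hker))
  have hgram := pow_mulVec_dotProduct_eq_powerSum ζ hUo hUo' hT hvy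
  set a : Fin r → ℝ := fun i => (fun q => y (q, i)) ⬝ᵥ (fun q => y (q, i))
  have ha (i : Fin r) : 0 ≤ a i := Finset.sum_nonneg fun q _ => mul_self_nonneg _
  have htop : ∃ i, Real.cos (ζ i) ^ 2 = c₁ ^ 2 ∧ 0 < a i := by
    obtain ⟨p, hpe, hp⟩ := hnz
    have hy : (fun q => y (q, p.2)) ≠ 0 := fun h => hp (congrFun h p.1)
    exact ⟨p.2, by rw [hconst p.2 hpe],
      (ha _).lt_of_ne (Ne.symm (dotProduct_self_eq_zero.not.mpr hy))⟩
  obtain ⟨K, hK⟩ := exists_abs_sqrt_powerSum_div_sub_le ha (fun i => sq_nonneg _) (hcos_pos _)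
    (hcos_pos _).le hcos_lt.le (cos_sq_eq_or_le_of_monotone hpos hhalf hmono hconst) htop
  refine exists_bound_and_tendsto_of_abs_succ_sub_le (K := K)
    (div_pos (hcos_pos _) (hcos_pos _)) ((div_lt_one (hcos_pos _)).mpr hcos_lt) fun j => ?_
  rw [Nat.add_sub_cancel, euclNorm_eq_sqrt_dotProduct, euclNorm_eq_sqrt_dotProduct, (hgram j).2,
    (hgram (j + 1)).1, (hgram j).1, div_sqrt_mul_sqrt (powerSum_nonneg ha (fun i => sq_nonneg _) _)]
  exact hK j
end
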